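/- arXiv:1501.02250 — 4 statements merged into one kernel-verified Lean document; each statement's English description precedes it below -/
import Mathlib

section
/- An FL_ew-algebra that is both weakly contractive (satisfies x ∧ ¬x = 0) and involutive (satisfies ¬¬x = x) is a Boolean algebra, i.e., it satisfies x ∨ ¬x = 1 and x·x = x. -/
class FLew (α : Type*) extends Lattice α, CommMonoid α, Zero α where
  flew_zero_le : ∀ x : α, 0 ≤ x
  flew_le_one : ∀ x : α, x ≤ 1
  arr : α → α → α
  resid : ∀ x y z : α, x * y ≤ z ↔ x ≤ arr y z

def FLew.neg {α : Type*} [FLew α] (x : α) : α := FLew.arr x 0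

inductive Term where
  | var : ℕ → Term
  | zero : Term
  | one : Term
  | mul : Term → Term → Term
  | arr : Term → Term → Term
  | inf : Term → Term → Term
  | sup : Term → Term → Term

def Term.eval {α : Type*} [FLew α] (e : ℕ → α) : Term → α
  | .var n => e n
  | .zero => 0
  | .one => 1
  | .mul a b => a.eval e * b.eval e
  | .arr a b => FLew.arr (a.eval e) (b.eval e)
  | .inf a b => a.eval e ⊓ b.eval e
  | .sup a b => a.eval e ⊔ b.eval e

def Term.evalB (e : ℕ → Bool) : Term → Bool
  | .var n => e n
  | .zero => false
  | .one => true
  | .mul a b => a.evalB e && b.evalB e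
  | .arr a b => !a.evalB e || b.evalB e
  | .inf a b => a.evalB e && b.evalB e
  | .sup a b => a.evalB e || b.evalB e

/-- Satisfiability in the two-element Boolean algebra. -/
def BoolSat (t : Term) : Prop := ∃ e : ℕ → Bool, t.evalB e = true

section Aux
variable {α : Type*} [FLew α]
open FLew

lemma flew_le_arr {x y z : α} (h : x * y ≤ z) : x ≤ arr y z := (FLew.resid x y z).mp h
lemma flew_mul_le {x y z : α} (h : x ≤ arr y z) : x * y ≤ z := (FLew.resid x y z).mpr h

lemma flew_mul_le_mul_right {a b : α} (c : α) (h : a ≤ b) : a * c ≤ b * c :=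
  flew_mul_le (h.trans (flew_le_arr (le_refl (b * c))))

lemma flew_neg_anti {a b : α} (h : a ≤ b) : neg b ≤ neg a := by
  apply flew_le_arr
  calc neg b * a ≤ neg b * b := by
        rw [mul_comm (neg b) a, mul_comm (neg b) b]; exact flew_mul_le_mul_right _ h
    _ ≤ 0 := flew_mul_le (le_refl (neg b))

lemma flew_mul_sup (a x y : α) : a * (x ⊔ y) = a * x ⊔ a * y := by
  apply le_antisymm
  · rw [mul_comm]
    apply flew_mul_le
    apply sup_le
    · exact flew_le_arr (by rw [mul_comm]; exact le_sup_left)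
    · exact flew_le_arr (by rw [mul_comm]; exact le_sup_right)
  · apply sup_le
    · rw [mul_comm a x, mul_comm a (x ⊔ y)]; exact flew_mul_le_mul_right a le_sup_left
    · rw [mul_comm a y, mul_comm a (x ⊔ y)]; exact flew_mul_le_mul_right a le_sup_right

lemma flew_neg_zero : neg (0 : α) = 1 :=
  le_antisymm (FLew.flew_le_one _) (flew_le_arr (le_of_eq (one_mul 0)))

end Aux

theorem stmt_5 {α : Type*} [FLew α]
    (hwc : ∀ x : α, x ⊓ FLew.neg x = 0)
    (hinv : ∀ x : α, FLew.neg (FLew.neg x) = x) :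
    ∀ x : α, x ⊔ FLew.neg x = 1 ∧ x * x = x := by
  intro x
  open FLew in
  have hlem : x ⊔ neg x = 1 := by
    have h0 : neg (x ⊔ neg x) = 0 := by
      apply le_antisymm _ (FLew.flew_zero_le _)
      have h1 : neg (x ⊔ neg x) ≤ neg x := flew_neg_anti le_sup_left
      have h2 : neg (x ⊔ neg x) ≤ x := by
        have := flew_neg_anti (le_sup_right : neg x ≤ x ⊔ neg x)
        rwa [hinv] at this
      calc neg (x ⊔ neg x) ≤ x ⊓ neg x := le_inf h2 h1
        _ = 0 := hwc x
    calc x ⊔ neg x = neg (neg (x ⊔ neg x)) := (hinv _).symm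
      _ = neg 0 := by rw [h0]
      _ = 1 := flew_neg_zero
  refine ⟨hlem, le_antisymm ?_ ?_⟩
  · calc x * x ≤ 1 * x := flew_mul_le_mul_right x (FLew.flew_le_one x)
      _ = x := one_mul x
  · -- show x ≤ x * x via neg (x*x) ≤ neg x and involution
    set a := arr x (neg x) with ha
    have hax : a * x ≤ neg x := flew_mul_le (le_refl a)
    have hanx : a * neg x ≤ neg x := by
      calc a * neg x ≤ 1 * neg x := flew_mul_le_mul_right _ (FLew.flew_le_one a)
        _ = neg x := one_mul _
    have haneg : a ≤ neg x := by
      calc a = a * 1 := (mul_one a).symm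
        _ = a * (x ⊔ neg x) := by rw [hlem]
        _ = a * x ⊔ a * neg x := flew_mul_sup a x (neg x)
        _ ≤ neg x := sup_le hax hanx
    have hcur : neg (x * x) ≤ a := by
      apply flew_le_arr
      apply flew_le_arr
      show neg (x * x) * x * x ≤ 0
      rw [mul_assoc]
      exact flew_mul_le (le_refl (neg (x * x)))
    have : neg (x * x) ≤ neg x := hcur.trans haneg
    have := flew_neg_anti this
    rwa [hinv, hinv] at this
end

section
/- In a nontrivial weakly contractive FL_ew-algebra A, a term φ is positively satisfiable in A if and only if φ is satisfiable in the two-element Boolean algebra. -/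
namespace FLewAux
open FLew

variable {α : Type*} [FLew α]

lemma le_arr {x y z : α} : x * y ≤ z ↔ x ≤ arr y z := FLew.resid x y z

lemma arr_mul_le (y z : α) : arr y z * y ≤ z := le_arr.mpr le_rfl

lemma mmono {x y z w : α} (h1 : x ≤ y) (h2 : z ≤ w) : x * z ≤ y * w := by
  have ha : x * z ≤ y * z :=
    le_arr.mpr (h1.trans (le_arr.mp (le_refl (y * z))))
  have hb : z * y ≤ w * y :=
    le_arr.mpr (h2.trans (le_arr.mp (le_refl (w * y))))
  calc x * z ≤ y * z := ha
    _ = z * y := mul_comm _ _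
    _ ≤ w * y := hb
    _ = y * w := mul_comm _ _

lemma mul_le_left (x y : α) : x * y ≤ x := by
  have := mmono (le_refl x) (flew_le_one y)
  simpa using this

lemma mul_le_right (x y : α) : x * y ≤ y := by
  rw [mul_comm]; exact mul_le_left y x

lemma zero_mul' (x : α) : (0 : α) * x = 0 :=
  le_antisymm (le_arr.mpr (flew_zero_le _)) (flew_zero_le _)

lemma mul_neg_self (x : α) : x * neg x = 0 := by
  have := arr_mul_le x (0 : α)
  rw [mul_comm] at this
  exact le_antisymm this (flew_zero_le _)

lemma le_neg_iff {x y : α} : y ≤ neg x ↔ y * x = 0 := by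
  constructor
  · intro h
    exact le_antisymm (le_arr.mpr h) (flew_zero_le _)
  · intro h
    exact le_arr.mp (le_of_eq h)

lemma arr_zero_left (z : α) : arr 0 z = 1 := by
  refine le_antisymm (flew_le_one _) (le_arr.mp ?_)
  rw [mul_comm, zero_mul']
  exact flew_zero_le _

lemma arr_one_zero : arr (1 : α) 0 = 0 := by
  refine le_antisymm ?_ (flew_zero_le _)
  have := arr_mul_le (1 : α) (0 : α)
  simpa using this

lemma arr_self_one (x : α) : arr x x = 1 := by
  refine le_antisymm (flew_le_one _) (le_arr.mp ?_)
  simpa using flew_le_one x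

variable (hwc : ∀ x : α, x ⊓ FLew.neg x = 0)
include hwc

lemma eq_zero_of_le_both {z x : α} (h1 : z ≤ x) (h2 : z * x = 0) : z = 0 := by
  have h3 : z ≤ neg x := le_neg_iff.mpr h2
  have := le_inf h1 h3
  rw [hwc x] at this
  exact le_antisymm this (flew_zero_le _)

lemma neg_pow (x : α) (n : ℕ) : neg (x ^ (n + 1)) = neg x := by
  induction n with
  | zero => rw [pow_one]
  | succ n ih =>
    refine le_antisymm ?_ ?_
    · refine le_neg_iff.mpr ?_
      set w := neg (x ^ (n + 2)) with hw
      have hw0 : w * x ^ (n + 2) = 0 := by rw [mul_comm]; exact mul_neg_self _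
      have hz : (w * x) * x ^ (n + 1) = 0 := by
        rw [mul_assoc, ← pow_succ']
        exact hw0
      have hz1 : w * x ≤ neg x := by
        rw [← ih]
        exact le_neg_iff.mpr hz
      have hz2 : w * x ≤ x := mul_le_right _ _
      exact eq_zero_of_le_both hwc hz2 (le_neg_iff.mp hz1)
    · refine le_neg_iff.mpr ?_
      have : neg x * x ^ (n + 2) = (neg x * x) * x ^ (n + 1) := by
        rw [mul_assoc, ← pow_succ']
      rw [this, mul_comm (neg x) x, mul_neg_self, zero_mul']

lemma pow_ne_zero' {x : α} (hx : x ≠ 0) (n : ℕ) : x ^ (n + 1) ≠ 0 := by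
  intro h
  apply hx
  have h1 : neg x = 1 := by
    rw [← neg_pow hwc x n, h]
    unfold neg
    exact arr_zero_left 0
  have h2 := hwc x
  rw [h1, inf_eq_left.mpr (flew_le_one x)] at h2
  exact h2


omit hwc in
lemma mul_sup_le (z x y : α) : z * (x ⊔ y) ≤ (z * x) ⊔ (z * y) := by
  rw [mul_comm]
  refine le_arr.mpr (sup_le ?_ ?_)
  · exact le_arr.mp (by rw [mul_comm]; exact le_sup_left)
  · exact le_arr.mp (by rw [mul_comm]; exact le_sup_right)

omit hwc in
lemma neg_mul_neg_le_neg_sup (x y : α) : neg x * neg y ≤ neg (x ⊔ y) := by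
  refine le_neg_iff.mpr (le_antisymm ?_ (flew_zero_le _))
  refine (mul_sup_le _ _ _).trans (sup_le ?_ ?_)
  · have : neg x * neg y * x ≤ neg x * x := by
      have := mmono (mul_le_left (neg x) (neg y)) (le_refl x)
      exact this
    refine this.trans ?_
    rw [mul_comm, mul_neg_self]
  · have : neg x * neg y * y ≤ neg y * y := by
      exact mmono (mul_le_right (neg x) (neg y)) (le_refl y)
    refine this.trans ?_
    rw [mul_comm, mul_neg_self]

/-- `F` is a proper filter containing `v`. -/
def Good (v : α) (F : Set α) : Prop :=
  v ∈ F ∧ (0 : α) ∉ F ∧ (1 : α) ∈ F ∧ (∀ x ∈ F, ∀ y, x ≤ y → y ∈ F) ∧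
    (∀ x ∈ F, ∀ y ∈ F, x * y ∈ F)

lemma exists_max (hnt : (0 : α) ≠ 1) {v : α} (hv : v ≠ 0) :
    ∃ F : Set α, Good v F ∧ ∀ x, x ∉ F → neg x ∈ F := by
  set S : Set (Set α) := {F | Good v F} with hS
  have hF0 : ({z | ∃ n : ℕ, v ^ n ≤ z} : Set α) ∈ S := by
    refine ⟨⟨1, by simpa using le_rfl⟩, ?_, ⟨0, by simpa using flew_le_one 1⟩, ?_, ?_⟩
    · rintro ⟨n, hn⟩
      have hn' : v ^ n = 0 := le_antisymm hn (flew_zero_le _)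
      cases n with
      | zero => exact hnt (by simpa using hn'.symm)
      | succ k => exact pow_ne_zero' hwc hv k hn'
    · rintro x ⟨n, hn⟩ y hxy
      exact ⟨n, hn.trans hxy⟩
    · rintro x ⟨n, hn⟩ y ⟨m, hm⟩
      exact ⟨n + m, by rw [pow_add]; exact mmono hn hm⟩
  obtain ⟨M, -, hMmax⟩ := zorn_subset_nonempty S (fun c hcS hc hne => by
    obtain ⟨F1, hF1⟩ := hne
    refine ⟨⋃₀ c, ⟨?_, ?_, ?_, ?_, ?_⟩, fun s hs => Set.subset_sUnion_of_mem hs⟩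
    · exact ⟨F1, hF1, (hcS hF1).1⟩
    · rintro ⟨F2, hF2, h0⟩
      exact (hcS hF2).2.1 h0
    · exact ⟨F1, hF1, (hcS hF1).2.2.1⟩
    · rintro x ⟨F2, hF2, hx⟩ y hxy
      exact ⟨F2, hF2, (hcS hF2).2.2.2.1 x hx y hxy⟩
    · rintro x ⟨F2, hF2, hx⟩ y ⟨F3, hF3, hy⟩
      rcases hc.total hF2 hF3 with h | h
      · exact ⟨F3, hF3, (hcS hF3).2.2.2.2 x (h hx) y hy⟩
      · exact ⟨F2, hF2, (hcS hF2).2.2.2.2 x hx y (h hy)⟩)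
    _ hF0
  obtain ⟨hvM, h0M, h1M, hupM, hmulM⟩ := hMmax.prop
  refine ⟨M, hMmax.prop, fun x hx => ?_⟩
  set F' : Set α := {z | ∃ f ∈ M, ∃ n : ℕ, f * x ^ n ≤ z} with hF'
  have hMF' : M ⊆ F' := fun f hf => ⟨f, hf, 0, by simpa using le_rfl⟩
  have hxF' : x ∈ F' := ⟨1, h1M, 1, by simpa using le_rfl⟩
  have h0F' : (0 : α) ∈ F' := by
    by_contra h0
    have hG : F' ∈ S := by
      refine ⟨hMF' hvM, h0, hMF' h1M, ?_, ?_⟩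
      · rintro a ⟨f, hf, n, hn⟩ b hab
        exact ⟨f, hf, n, hn.trans hab⟩
      · rintro a ⟨f, hf, n, hn⟩ b ⟨g', hg, m, hm⟩
        refine ⟨f * g', hmulM f hf g' hg, n + m, ?_⟩
        calc f * g' * x ^ (n + m) = (f * x ^ n) * (g' * x ^ m) := by
              rw [pow_add, mul_mul_mul_comm]
          _ ≤ a * b := mmono hn hm
    exact hx (hMmax.le_of_ge hG hMF' hxF')
  obtain ⟨f, hf, n, hn⟩ := h0F'
  have hn' : f * x ^ n = 0 := le_antisymm hn (flew_zero_le _)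
  cases n with
  | zero =>
    rw [pow_zero, mul_one] at hn'
    exact absurd (hn' ▸ hf) h0M
  | succ k =>
    have : f ≤ neg (x ^ (k + 1)) := le_neg_iff.mpr hn'
    rw [neg_pow hwc] at this
    exact hupM f hf _ this

attribute [local instance] Classical.propDecidable

lemma eval_mem_iff {v : α} {F : Set α} (hG : Good v F)
    (hcomp : ∀ x, x ∉ F → neg x ∈ F) (e : ℕ → α) (t : Term) :
    t.evalB (fun n => decide (e n ∈ F)) = true ↔ t.eval e ∈ F := by
  obtain ⟨hvF, h0F, h1F, hup, hmul⟩ := hG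
  induction t with
  | var n => simp [Term.evalB, Term.eval]
  | zero => simp [Term.evalB, Term.eval, h0F]
  | one => simp [Term.evalB, Term.eval, h1F]
  | mul a b iha ihb =>
    simp only [Term.evalB, Term.eval, Bool.and_eq_true, iha, ihb]
    constructor
    · rintro ⟨ha, hb⟩; exact hmul _ ha _ hb
    · intro h
      exact ⟨hup _ h _ (mul_le_left _ _), hup _ h _ (mul_le_right _ _)⟩
  | arr a b iha ihb =>
    simp only [Term.evalB, Term.eval, Bool.or_eq_true, Bool.not_eq_true', iha, ihb]
    constructor
    · rintro (ha | hb)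
      · have ha' : a.eval e ∉ F := by rw [← iha]; simp [ha]
        have := hcomp _ ha'
        refine hup _ this _ (le_arr.mp ?_)
        rw [mul_comm, mul_neg_self]
        exact flew_zero_le _
      · exact hup _ hb _ (le_arr.mp (mul_le_left _ _))
    · intro h
      by_cases ha : a.eval e ∈ F
      · refine Or.inr (hup _ (hmul _ h _ ha) _ ?_)
        exact arr_mul_le _ _
      · exact Or.inl (by rw [← Bool.not_eq_true, iha]; exact ha)
  | inf a b iha ihb =>
    simp only [Term.evalB, Term.eval, Bool.and_eq_true, iha, ihb]
    constructor
    · rintro ⟨ha, hb⟩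
      exact hup _ (hmul _ ha _ hb) _ (le_inf (mul_le_left _ _) (mul_le_right _ _))
    · intro h
      exact ⟨hup _ h _ inf_le_left, hup _ h _ inf_le_right⟩
  | sup a b iha ihb =>
    simp only [Term.evalB, Term.eval, Bool.or_eq_true, iha, ihb]
    constructor
    · rintro (ha | hb)
      · exact hup _ ha _ le_sup_left
      · exact hup _ hb _ le_sup_right
    · intro h
      by_contra hcon
      push_neg at hcon
      obtain ⟨ha, hb⟩ := hcon
      have hna := hcomp _ ha
      have hnb := hcomp _ hb
      have hn : neg (a.eval e ⊔ b.eval e) ∈ F :=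
        hup _ (hmul _ hna _ hnb) _ (neg_mul_neg_le_neg_sup _ _)
      have h0 : (0 : α) ∈ F := by
        have := hmul _ h _ hn
        rwa [mul_neg_self] at this
      exact h0F h0


omit hwc in
lemma eval_bool (e : ℕ → Bool) (t : Term) :
    t.eval (fun n => if e n then (1 : α) else 0) = (if t.evalB e then (1 : α) else 0) := by
  have h01 : (0 : α) ⊓ 1 = 0 := inf_eq_left.mpr (flew_zero_le 1)
  have h10 : (1 : α) ⊓ 0 = 0 := inf_eq_right.mpr (flew_zero_le 1)
  have s01 : (0 : α) ⊔ 1 = 1 := sup_eq_right.mpr (flew_zero_le 1)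
  have s10 : (1 : α) ⊔ 0 = 1 := sup_eq_left.mpr (flew_zero_le 1)
  induction t with
  | var n =>
    simp [Term.eval, Term.evalB]
    by_cases h : e n = true <;> simp [h]
  | zero => simp [Term.eval, Term.evalB]
  | one => simp [Term.eval, Term.evalB]
  | mul a b iha ihb =>
    simp only [Term.eval, Term.evalB, iha, ihb]
    by_cases ha : Term.evalB e a = true <;> by_cases hb : Term.evalB e b = true <;>
      simp [ha, hb, zero_mul', mul_one, one_mul]
  | arr a b iha ihb =>
    simp only [Term.eval, Term.evalB, iha, ihb]
    by_cases ha : Term.evalB e a = true <;> by_cases hb : Term.evalB e b = true <;>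
      simp [ha, hb, arr_zero_left, arr_one_zero, arr_self_one]
  | inf a b iha ihb =>
    simp only [Term.eval, Term.evalB, iha, ihb]
    by_cases ha : Term.evalB e a = true <;> by_cases hb : Term.evalB e b = true <;>
      simp [ha, hb, h01, h10]
  | sup a b iha ihb =>
    simp only [Term.eval, Term.evalB, iha, ihb]
    by_cases ha : Term.evalB e a = true <;> by_cases hb : Term.evalB e b = true <;>
      simp [ha, hb, s01, s10]

end FLewAux

theorem stmt_11 {α : Type*} [FLew α] (hnt : (0 : α) ≠ 1)
    (hwc : ∀ x : α, x ⊓ FLew.neg x = 0) (φ : Term) :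
    (∃ e : ℕ → α, φ.eval e ≠ 0) ↔ BoolSat φ := by
  classical
  constructor
  · rintro ⟨e, he⟩
    obtain ⟨F, hG, hcomp⟩ := FLewAux.exists_max hwc hnt he
    exact ⟨fun n => decide (e n ∈ F), (FLewAux.eval_mem_iff hwc hG hcomp e φ).mpr hG.1⟩
  · rintro ⟨e, he⟩
    refine ⟨fun n => if e n then (1 : α) else 0, ?_⟩
    rw [FLewAux.eval_bool, he]
    simpa using hnt.symm
end

section
/- Let A be a nontrivial linearly ordered FL_ew-algebra such that ¬ has no fixed point and the set A₁ = {x ∈ A : x·x > 0} is closed under multiplication. Then the map sending elements of A₀ = {x : x·x = 0} to 0 and elements of A₁ to 1 is a homomorphism from A onto the two-element Boolean algebra. -/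
theorem stmt_13 {α : Type*} [FLew α] (hnt : (0 : α) ≠ 1)
    (hlin : ∀ a b : α, a ≤ b ∨ b ≤ a)
    (hfix : ∀ a : α, FLew.neg a ≠ a)
    (hclosed : ∀ a b : α, a * a ≠ 0 → b * b ≠ 0 → (a * b) * (a * b) ≠ 0) :
    ∃ h : α → Bool,
      (∀ x : α, h x = false ↔ x * x = 0) ∧
      Function.Surjective h ∧
      h 0 = false ∧ h 1 = true ∧
      (∀ x y : α, h (x * y) = (h x && h y)) ∧
      (∀ x y : α, h (FLew.arr x y) = (!h x || h y)) ∧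
      (∀ x y : α, h (x ⊓ y) = (h x && h y)) ∧
      (∀ x y : α, h (x ⊔ y) = (h x || h y)) := by
  classical
  have res := fun x y z : α => FLew.resid x y z
  have zle := FLew.flew_zero_le (α := α)
  have mono : ∀ a b c : α, a ≤ b → a * c ≤ b * c := fun a b c hab =>
    (res a c (b * c)).mpr (le_trans hab ((res b c (b * c)).mp le_rfl))
  have sqmono : ∀ a b : α, a ≤ b → a * a ≤ b * b := fun a b hab =>
    le_trans (mono a b a hab) (by rw [mul_comm b a, mul_comm b b]; exact mono a b b hab)
  have negmul : ∀ x : α, FLew.neg x * x ≤ 0 := fun x => (res _ x 0).mpr le_rfl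
  have mul_le_right : ∀ a b : α, a * b ≤ b := fun a b => by
    have := mono a 1 b (FLew.flew_le_one a); rwa [one_mul] at this
  have zero_eq : ∀ a : α, a * 0 = 0 := fun a =>
    le_antisymm (mul_le_right a 0) (zle _)
  have le_zero : ∀ a : α, a ≤ 0 → a = 0 := fun a h => le_antisymm h (zle a)
  have sq0 : ∀ x : α, x * x = 0 ↔ x ≤ FLew.neg x := by
    intro x
    constructor
    · intro h; exact (res x x 0).mp h.le
    · intro h
      exact le_zero _ (le_trans (mono x (FLew.neg x) x h) (negmul x))
  have anti : ∀ a b : α, a ≤ b → FLew.neg b ≤ FLew.neg a := by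
    intro a b hab
    refine (res _ a 0).mp ?_
    calc FLew.neg b * a ≤ FLew.neg b * b := by
          rw [mul_comm _ a, mul_comm _ b]; exact mono a b _ hab
      _ ≤ 0 := negmul b
  have key1 : ∀ x : α, x * x = 0 → FLew.neg x * FLew.neg x ≠ 0 := by
    intro x hx hnx
    have h1 : x ≤ FLew.neg x := (sq0 x).mp hx
    have h2 : FLew.neg x ≤ FLew.neg (FLew.neg x) := (sq0 _).mp hnx
    have h3 : FLew.neg (FLew.neg x) ≤ FLew.neg x := anti _ _ h1
    exact hfix (FLew.neg x) (le_antisymm h3 h2)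
  have sq4 : ∀ t : α, (t * t) * (t * t) = 0 → t * t = 0 := by
    intro t h
    by_contra ht
    exact hclosed t t ht ht h
  set h : α → Bool := fun x => if x * x = 0 then false else true with hh
  have hiff : ∀ x : α, h x = false ↔ x * x = 0 := by
    intro x; simp only [hh]; split_ifs with hx <;> simp [hx]
  have htrue : ∀ x : α, h x = true ↔ x * x ≠ 0 := by
    intro x; simp only [hh]; split_ifs with hx <;> simp [hx]
  have hmono : ∀ a b : α, a ≤ b → b * b = 0 → a * a = 0 := by
    intro a b hab hb
    exact le_zero _ (hb ▸ sqmono a b hab)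
  have h0 : h 0 = false := (hiff 0).mpr (zero_eq 0)
  have h1 : h 1 = true := (htrue 1).mpr (by rw [one_mul]; exact fun e => hnt e.symm)
  refine ⟨h, hiff, fun b => by cases b <;> [exact ⟨0, h0⟩; exact ⟨1, h1⟩], h0, h1, ?_, ?_, ?_, ?_⟩
  · -- mul
    intro x y
    have keq : (x * y) * (x * y) = (x * x) * (y * y) := by
      rw [mul_mul_mul_comm]
    by_cases hx : x * x = 0
    · have : (x * y) * (x * y) = 0 := by rw [keq, hx, mul_comm, zero_eq]
      rw [(hiff _).mpr this, (hiff x).mpr hx, Bool.false_and]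
    · by_cases hy : y * y = 0
      · have : (x * y) * (x * y) = 0 := by rw [keq, hy, zero_eq]
        rw [(hiff _).mpr this, (hiff y).mpr hy, Bool.and_false]
      · rw [(htrue _).mpr (hclosed x y hx hy), (htrue x).mpr hx, (htrue y).mpr hy]
        rfl
  · -- arr
    intro x y
    by_cases hx : x * x = 0
    · -- neg x ≤ arr x y, and (neg x)^2 ≠ 0
      have hle : FLew.neg x ≤ FLew.arr x y :=
        (res _ x y).mp (le_trans (negmul x) (zle y))
      have : FLew.arr x y * FLew.arr x y ≠ 0 := fun hq =>
        key1 x hx (hmono _ _ hle hq)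
      rw [(htrue _).mpr this, (hiff x).mpr hx]; rfl
    · by_cases hy : y * y = 0
      · -- t := arr x y has t*t = 0
        set t := FLew.arr x y with ht
        have htx : t * x ≤ y := (res t x y).mpr le_rfl
        have tt0 : t * t = 0 := by
          rcases hlin t x with hc | hc
          · apply sq4
            have h1 : t * t ≤ y := le_trans (mono t x t hc) (by rw [mul_comm x t]; exact htx)
            have h2 : (t * t) * (t * t) ≤ y * y := sqmono _ _ h1
            rw [hy] at h2
            exact le_zero _ h2
          · exfalso
            have h1 : x * x ≤ y := le_trans (mono x t x hc) htx
            have h2 : (x * x) * (x * x) ≤ y * y := sqmono _ _ h1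
            rw [hy] at h2
            exact hx (sq4 x (le_zero _ h2))
        rw [(hiff _).mpr tt0, (htrue x).mpr hx, (hiff y).mpr hy]; rfl
      · -- y ≤ arr x y
        have hle : y ≤ FLew.arr x y :=
          (res y x y).mp (by rw [mul_comm]; exact mul_le_right x y)
        have : FLew.arr x y * FLew.arr x y ≠ 0 := fun hq => hy (hmono _ _ hle hq)
        rw [(htrue _).mpr this, (htrue y).mpr hy, Bool.or_true]
  · -- inf
    intro x y
    rcases hlin x y with hc | hc
    · rw [inf_eq_left.mpr hc]
      by_cases hx : x * x = 0
      · rw [(hiff x).mpr hx, Bool.false_and]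
      · have hy : y * y ≠ 0 := fun hy => hx (hmono x y hc hy)
        rw [(htrue x).mpr hx, (htrue y).mpr hy]; rfl
    · rw [inf_eq_right.mpr hc]
      by_cases hy : y * y = 0
      · rw [(hiff y).mpr hy, Bool.and_false]
      · have hx : x * x ≠ 0 := fun hx => hy (hmono y x hc hx)
        rw [(htrue x).mpr hx, (htrue y).mpr hy]; rfl
  · -- sup
    intro x y
    rcases hlin x y with hc | hc
    · rw [sup_eq_right.mpr hc]
      by_cases hy : y * y = 0
      · have hx : x * x = 0 := hmono x y hc hy
        rw [(hiff x).mpr hx, (hiff y).mpr hy]; rfl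
      · rw [(htrue y).mpr hy, Bool.or_true]
    · rw [sup_eq_left.mpr hc]
      by_cases hx : x * x = 0
      · have hy : y * y = 0 := hmono y x hc hx
        rw [(hiff x).mpr hx, (hiff y).mpr hy]; rfl
      · rw [(htrue x).mpr hx, Bool.true_or]
end

section
/- In the standard MV-algebra on [0,1], the interpretation of any term built from literals (variables and negated variables) using only · and ∨ is a convex function on [0,1]^n; consequently its maximum over [0,1]^n equals its maximum over {0,1}^n. -/
/-- Evaluation of terms in the standard MV-algebra on `[0,1] ⊆ ℝ`. -/
def Term.evalL (e : ℕ → ℝ) : Term → ℝ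
  | .var n => e n
  | .zero => 0
  | .one => 1
  | .mul a b => max 0 (a.evalL e + b.evalL e - 1)
  | .arr a b => min 1 (1 - a.evalL e + b.evalL e)
  | .inf a b => min (a.evalL e) (b.evalL e)
  | .sup a b => max (a.evalL e) (b.evalL e)

/-- `(·,∨)`-terms: built from literals using only `·` and `∨`. -/
inductive PV : Term → Prop
  | var (n : ℕ) : PV (.var n)
  | nvar (n : ℕ) : PV (.arr (.var n) .zero)
  | mul {a b : Term} : PV a → PV b → PV (.mul a b)
  | sup {a b : Term} : PV a → PV b → PV (.sup a b)

def tvars : Term → Finset ℕ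
  | .var n => {n}
  | .zero => ∅
  | .one => ∅
  | .mul a b => tvars a ∪ tvars b
  | .arr a b => tvars a ∪ tvars b
  | .inf a b => tvars a ∪ tvars b
  | .sup a b => tvars a ∪ tvars b

lemma evalL_congr (t : Term) (e e' : ℕ → ℝ) (h : ∀ n ∈ tvars t, e n = e' n) :
    t.evalL e = t.evalL e' := by
  induction t with
  | var n => exact h n (by simp [tvars])
  | zero => rfl
  | one => rfl
  | mul a b ha hb =>
      simp only [Term.evalL]
      rw [ha (fun n hn => h n (by simp [tvars, hn])),
          hb (fun n hn => h n (by simp [tvars, hn]))]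
  | arr a b ha hb =>
      simp only [Term.evalL]
      rw [ha (fun n hn => h n (by simp [tvars, hn])),
          hb (fun n hn => h n (by simp [tvars, hn]))]
  | inf a b ha hb =>
      simp only [Term.evalL]
      rw [ha (fun n hn => h n (by simp [tvars, hn])),
          hb (fun n hn => h n (by simp [tvars, hn]))]
  | sup a b ha hb =>
      simp only [Term.evalL]
      rw [ha (fun n hn => h n (by simp [tvars, hn])),
          hb (fun n hn => h n (by simp [tvars, hn]))]

lemma cube_convex : Convex ℝ {e : ℕ → ℝ | ∀ n, e n ∈ Set.Icc (0 : ℝ) 1} := by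
  intro x hx y hy a b ha hb hab n
  have hx' := hx n
  have hy' := hy n
  simp only [Set.mem_Icc, Pi.add_apply, Pi.smul_apply, smul_eq_mul] at *
  constructor
  · nlinarith [hx'.1, hy'.1]
  · nlinarith [hx'.2, hy'.2]

lemma pv_convex (φ : Term) (hφ : PV φ) :
    ConvexOn ℝ {e : ℕ → ℝ | ∀ n, e n ∈ Set.Icc (0 : ℝ) 1}
      (fun e => φ.evalL e) := by
  induction hφ with
  | var n =>
      refine ⟨cube_convex, fun x _ y _ a b _ _ _ => ?_⟩
      simp [Term.evalL]
  | nvar n =>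
      refine ⟨cube_convex, fun x hx y hy a b ha hb hab => ?_⟩
      have hx1 := (hx n).2
      have hy1 := (hy n).2
      have hx0 := (hx n).1
      have hy0 := (hy n).1
      simp only [Term.evalL, Pi.add_apply, Pi.smul_apply, smul_eq_mul]
      have key : ∀ u : ℝ, 0 ≤ u → u ≤ 1 → min 1 (1 - u + 0) = 1 - u := by
        intro u h0 h1
        rw [min_eq_right] <;> linarith
      rw [key _ (by positivity) (by nlinarith), key _ hx0 hx1, key _ hy0 hy1]
      nlinarith
  | @mul a b _ _ iha ihb =>
      have h1 : ConvexOn ℝ {e : ℕ → ℝ | ∀ n, e n ∈ Set.Icc (0 : ℝ) 1}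
          (fun e => a.evalL e + b.evalL e - 1) := by
        have := (iha.add ihb).sub (concaveOn_const 1 cube_convex)
        exact this
      have h2 := (convexOn_const (0 : ℝ) cube_convex).sup h1
      refine ⟨cube_convex, fun x hx y hy c d hc hd hcd => ?_⟩
      have := h2.2 hx hy hc hd hcd
      simpa [Term.evalL] using this
  | @sup a b _ _ iha ihb =>
      have h2 := iha.sup ihb
      refine ⟨cube_convex, fun x hx y hy c d hc hd hcd => ?_⟩
      have := h2.2 hx hy hc hd hcd
      simpa [Term.evalL] using this

lemma push (f : (ℕ → ℝ) → ℝ)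
    (hc : ConvexOn ℝ {e : ℕ → ℝ | ∀ n, e n ∈ Set.Icc (0 : ℝ) 1} f)
    (L : List ℕ) (e : ℕ → ℝ) (he : ∀ n, e n ∈ Set.Icc (0 : ℝ) 1) :
    ∃ e' : ℕ → ℝ, (∀ n, e' n ∈ Set.Icc (0 : ℝ) 1) ∧
      (∀ n ∈ L, e' n = 0 ∨ e' n = 1) ∧ f e ≤ f e' := by
  induction L with
  | nil => exact ⟨e, he, by simp, le_refl _⟩
  | cons n L ih =>
      obtain ⟨e', he', h01, hle⟩ := ih
      set t := e' n with ht
      set u0 := Function.update e' n (0 : ℝ) with hu0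
      set u1 := Function.update e' n (1 : ℝ) with hu1
      have hu0mem : ∀ m, u0 m ∈ Set.Icc (0 : ℝ) 1 := by
        intro m
        by_cases hm : m = n
        · subst hm; simp [hu0, Set.mem_Icc]
        · simpa [hu0, Function.update_of_ne hm] using he' m
      have hu1mem : ∀ m, u1 m ∈ Set.Icc (0 : ℝ) 1 := by
        intro m
        by_cases hm : m = n
        · subst hm; simp [hu1, Set.mem_Icc]
        · simpa [hu1, Function.update_of_ne hm] using he' m
      have ht0 : 0 ≤ t := (he' n).1
      have ht1 : t ≤ 1 := (he' n).2
      have hcomb : (1 - t) • u0 + t • u1 = e' := by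
        funext m
        by_cases hm : m = n
        · subst hm; simp [hu0, hu1, ht]
        · simp only [Pi.add_apply, Pi.smul_apply, smul_eq_mul, hu0, hu1,
            Function.update_of_ne hm]
          ring
      have hconv := hc.2 hu0mem hu1mem (by linarith : (0:ℝ) ≤ 1 - t) ht0
        (by ring : (1 - t) + t = 1)
      rw [hcomb] at hconv
      have hmax : f e' ≤ max (f u0) (f u1) := by
        calc f e' ≤ (1 - t) * f u0 + t * f u1 := by simpa using hconv
          _ ≤ (1 - t) * max (f u0) (f u1) + t * max (f u0) (f u1) := by
              nlinarith [le_max_left (f u0) (f u1), le_max_right (f u0) (f u1)]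
          _ = max (f u0) (f u1) := by ring
      by_cases hch : f u0 ≤ f u1
      · refine ⟨u1, hu1mem, ?_, ?_⟩
        · intro m hm
          by_cases hmn : m = n
          · subst hmn; right; simp [hu1]
          · rw [hu1, Function.update_of_ne hmn]
            exact h01 m (by simpa [hmn] using hm)
        · calc f e ≤ f e' := hle
            _ ≤ max (f u0) (f u1) := hmax
            _ = f u1 := max_eq_right hch
      · refine ⟨u0, hu0mem, ?_, ?_⟩
        · intro m hm
          by_cases hmn : m = n
          · subst hmn; left; simp [hu0]
          · rw [hu0, Function.update_of_ne hmn]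
            exact h01 m (by simpa [hmn] using hm)
        · calc f e ≤ f e' := hle
            _ ≤ max (f u0) (f u1) := hmax
            _ = f u0 := max_eq_left (le_of_not_ge hch)

theorem stmt_17 (φ : Term) (hφ : PV φ) :
    ConvexOn ℝ {e : ℕ → ℝ | ∀ n, e n ∈ Set.Icc (0 : ℝ) 1}
      (fun e => φ.evalL e) ∧
    (∀ e : ℕ → ℝ, (∀ n, e n ∈ Set.Icc (0 : ℝ) 1) →
      ∃ e' : ℕ → ℝ, (∀ n, e' n = 0 ∨ e' n = 1) ∧ φ.evalL e ≤ φ.evalL e') := by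
  have hconv := pv_convex φ hφ
  refine ⟨hconv, fun e he => ?_⟩
  obtain ⟨e', he', h01, hle⟩ := push (fun e => φ.evalL e) hconv (tvars φ).toList e he
  refine ⟨fun n => if n ∈ tvars φ then e' n else 0, fun n => ?_, ?_⟩
  · by_cases hn : n ∈ tvars φ
    · simpa [hn] using h01 n ((Finset.mem_toList).2 hn)
    · simp [hn]
  · calc φ.evalL e ≤ φ.evalL e' := hle
      _ = _ := evalL_congr φ e' _ (fun n hn => by simp [hn])
end
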